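/- arXiv:2304.11338 — 3 statements merged into one kernel-verified Lean document; each statement's English description precedes it below -/
import Mathlib

section
/- Let q : ℝ → ℝⁿ be a C² curve satisfying the constraints. Then for every ν = 1,…,k and every time t, B̄_ν(t) = d/dt[(ᾱ_ν − α_ν)(q(t),v(t),t)] − ∑_{μ=1}^k (∂α_ν/∂q_{m+μ})(q,v,t)·(ᾱ_μ − α_μ)(q,v,t) + (∂α_ν/∂t)(q,v,t). -/
open scoped BigOperators
noncomputable section
namespace NH

/-- The phase point `(q, v, t)` with `q : ℝⁿ` (n = m+k) and independent velocities `v : ℝᵐ`. -/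
abbrev Pt (m k : ℕ) : Type := (Fin (m+k) → ℝ) × (Fin m → ℝ) × ℝ

/-- The full phase point `(q, u, t)` with all velocities `u : ℝⁿ`. -/
abbrev PtL (m k : ℕ) : Type := (Fin (m+k) → ℝ) × (Fin (m+k) → ℝ) × ℝ

/-- Partial derivative of `f (q, w, t)` with respect to `q_i`. -/
def pq {n m' : ℕ} (f : (Fin n → ℝ) × (Fin m' → ℝ) × ℝ → ℝ) (i : Fin n)
    (x : (Fin n → ℝ) × (Fin m' → ℝ) × ℝ) : ℝ :=
  fderiv ℝ f x (Pi.single i 1, 0, 0)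

/-- Partial derivative of `f (q, w, t)` with respect to the velocity variable `w_j`. -/
def pv {n m' : ℕ} (f : (Fin n → ℝ) × (Fin m' → ℝ) × ℝ → ℝ) (j : Fin m')
    (x : (Fin n → ℝ) × (Fin m' → ℝ) × ℝ) : ℝ :=
  fderiv ℝ f x (0, Pi.single j 1, 0)

/-- Partial derivative of `f (q, w, t)` with respect to time `t`. -/
def pt {n m' : ℕ} (f : (Fin n → ℝ) × (Fin m' → ℝ) × ℝ → ℝ)
    (x : (Fin n → ℝ) × (Fin m' → ℝ) × ℝ) : ℝ :=
  fderiv ℝ f x (0, 0, 1)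

/-- Partial derivative of `U (q, t)` with respect to `q_i`. -/
def pUq {n : ℕ} (U : (Fin n → ℝ) × ℝ → ℝ) (i : Fin n) (x : (Fin n → ℝ) × ℝ) : ℝ :=
  fderiv ℝ U x (Pi.single i 1, 0)

/-- Partial derivative of `U (q, t)` with respect to `t`. -/
def pUt {n : ℕ} (U : (Fin n → ℝ) × ℝ → ℝ) (x : (Fin n → ℝ) × ℝ) : ℝ :=
  fderiv ℝ U x (0, 1)

variable {m k : ℕ}

/-- `û(q,v,t) = (v₁,…,vₘ, α₁(q,v,t),…,α_k(q,v,t))`. -/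
def uhat (α : Fin k → Pt m k → ℝ) (x : Pt m k) : Fin (m+k) → ℝ :=
  Fin.append x.2.1 (fun ν => α ν x)

/-- The full phase point `(q, û(q,v,t), t)` associated to `(q,v,t)`. -/
def Lpt (α : Fin k → Pt m k → ℝ) (x : Pt m k) : PtL m k :=
  (x.1, uhat α x, x.2.2)

/-- The restricted Lagrangian `L*(q,v,t) = L(q, û(q,v,t), t)`. -/
def Lstar (L : PtL m k → ℝ) (α : Fin k → Pt m k → ℝ) (x : Pt m k) : ℝ :=
  L (Lpt α x)

/-- `ᾱ_ν(q,v,t) = ∑_r v_r ∂α_ν/∂v_r`. -/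
def abar (α : Fin k → Pt m k → ℝ) (ν : Fin k) (x : Pt m k) : ℝ :=
  ∑ r : Fin m, x.2.1 r * pv (α ν) r x

/-- The restricted energy `E*(q,v,t) = ∑_r v_r ∂L*/∂v_r − L*`. -/
def Estar (L : PtL m k → ℝ) (α : Fin k → Pt m k → ℝ) (x : Pt m k) : ℝ :=
  ∑ r : Fin m, x.2.1 r * pv (Lstar L α) r x - Lstar L α x

/-- The energy `E(q,v,t) = ∑_i û_i (∂L/∂u_i)(q,û,t) − L*(q,v,t)`. -/
def En (L : PtL m k → ℝ) (α : Fin k → Pt m k → ℝ) (x : Pt m k) : ℝ :=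
  ∑ i : Fin (m+k), uhat α x i * pv L i (Lpt α x) - Lstar L α x

/-- `q̇_i(t)`. -/
def qdot {n : ℕ} (q : ℝ → Fin n → ℝ) (t : ℝ) (i : Fin n) : ℝ :=
  deriv (fun s => q s i) t

/-- The independent velocities `v(t) = (q̇₁,…,q̇ₘ)` along a curve. -/
def vel (m k : ℕ) (q : ℝ → Fin (m+k) → ℝ) (t : ℝ) (r : Fin m) : ℝ :=
  qdot q t (Fin.castAdd k r)

/-- The point `(q(t), v(t), t)` along a curve. -/
def along (m k : ℕ) (q : ℝ → Fin (m+k) → ℝ) (t : ℝ) : Pt m k :=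
  (q t, vel m k q t, t)

/-- The curve satisfies the nonholonomic constraints: `q̇_{m+ν} = α_ν(q, v, t)`. -/
def Constrained (α : Fin k → Pt m k → ℝ) (q : ℝ → Fin (m+k) → ℝ) : Prop :=
  ∀ (t : ℝ) (ν : Fin k), qdot q t (Fin.natAdd m ν) = α ν (along m k q t)

/-- The Voronec coefficients `B_rν(t)` along a constrained curve. -/
def Bco (α : Fin k → Pt m k → ℝ) (q : ℝ → Fin (m+k) → ℝ) (r : Fin m) (ν : Fin k) (t : ℝ) : ℝ :=
  deriv (fun s => pv (α ν) r (along m k q s)) t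
    - pq (α ν) (Fin.castAdd k r) (along m k q t)
    - ∑ μ : Fin k, pv (α μ) r (along m k q t) * pq (α ν) (Fin.natAdd m μ) (along m k q t)

/-- The Voronec equations of motion along a constrained curve. -/
def Voronec (L : PtL m k → ℝ) (α : Fin k → Pt m k → ℝ) (q : ℝ → Fin (m+k) → ℝ) : Prop :=
  ∀ (r : Fin m) (t : ℝ),
    deriv (fun s => pv (Lstar L α) r (along m k q s)) t
      - pq (Lstar L α) (Fin.castAdd k r) (along m k q t)
      - ∑ ν : Fin k, pq (Lstar L α) (Fin.natAdd m ν) (along m k q t) * pv (α ν) r (along m k q t)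
      - ∑ ν : Fin k, Bco α q r ν t * pv L (Fin.natAdd m ν) (Lpt α (along m k q t)) = 0

/-!
Differentiating `α_ν` along the curve by the chain rule, the constraint `q̇_{m+μ} = α_μ` turns
the `q`-partials into `∑ v_r ∂α_ν/∂q_r + ∑ α_μ ∂α_ν/∂q_{m+μ}`. Differentiating
`ᾱ_ν = ∑ v_r ∂α_ν/∂v_r` by the product rule gives `∑ v_r d/dt(∂α_ν/∂v_r)` plus the acceleration
terms `∑ v̇_r ∂α_ν/∂v_r`, which cancel against those of `dα_ν/dt`. What is left is `B̄_ν`, once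
the double sum `∑_r ∑_μ v_r (∂α_μ/∂v_r)(∂α_ν/∂q_{m+μ})` is read as `∑_μ ᾱ_μ ∂α_ν/∂q_{m+μ}`.
-/

theorem prod_eq_sum_basis {n m' : ℕ} (u : Fin n → ℝ) (w : Fin m' → ℝ) (c : ℝ) :
    ((u, w, c) : (Fin n → ℝ) × (Fin m' → ℝ) × ℝ)
      = ∑ i, u i • (Pi.single i 1, 0, 0) + ∑ r, w r • (0, Pi.single r 1, 0) + c • (0, 0, 1) := by
  simp only [Prod.ext_iff, Prod.fst_add, Prod.snd_add, Prod.fst_sum, Prod.snd_sum, Prod.smul_fst,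
    Prod.smul_snd, ← pi_eq_sum_univ']
  simp

theorem fderiv_apply_eq_sum_partials {n m' : ℕ} (f : (Fin n → ℝ) × (Fin m' → ℝ) × ℝ → ℝ)
    (x : (Fin n → ℝ) × (Fin m' → ℝ) × ℝ) (u : Fin n → ℝ) (w : Fin m' → ℝ) (c : ℝ) :
    fderiv ℝ f x (u, w, c) = ∑ i, u i * pq f i x + ∑ r, w r * pv f r x + c * pt f x := by
  rw [prod_eq_sum_basis u w c]
  simp only [map_add, map_sum, map_smul, smul_eq_mul, pq, pv, pt]

theorem differentiable_pv {n m' : ℕ} {f : (Fin n → ℝ) × (Fin m' → ℝ) × ℝ → ℝ}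
    (hf : ContDiff ℝ 2 f) (j : Fin m') : Differentiable ℝ (pv f j) :=
  ((hf.fderiv_right (m := 1) le_rfl).clm_apply contDiff_const).differentiable one_ne_zero

section Curve

variable {q : ℝ → Fin (m+k) → ℝ} {t : ℝ}

theorem differentiable_vel (hq : ContDiff ℝ 2 q) (r : Fin m) :
    Differentiable ℝ (fun s => vel m k q s r) :=
  (contDiff_pi.mp hq _).differentiable_deriv_two

theorem hasDerivAt_along (hq : ContDiff ℝ 2 q) :
    HasDerivAt (along m k q) (qdot q t, fun r => deriv (fun s => vel m k q s r) t, 1) t := by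
  have hq' : HasDerivAt q (qdot q t) t :=
    hasDerivAt_pi.mpr fun i => ((contDiff_pi.mp hq i).differentiable two_ne_zero t).hasDerivAt
  have hv : HasDerivAt (vel m k q) (fun r => deriv (fun s => vel m k q s r) t) t :=
    hasDerivAt_pi.mpr fun r => (differentiable_vel hq r t).hasDerivAt
  exact hq'.prodMk (hv.prodMk (hasDerivAt_id t))

theorem Constrained.hasDerivAt_comp_along (hcon : Constrained α q) (hq : ContDiff ℝ 2 q)
    {f : Pt m k → ℝ} (hf : DifferentiableAt ℝ f (along m k q t)) :
    HasDerivAt (fun s => f (along m k q s))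
      (∑ r, vel m k q t r * pq f (Fin.castAdd k r) (along m k q t)
        + ∑ μ, α μ (along m k q t) * pq f (Fin.natAdd m μ) (along m k q t)
        + ∑ r, deriv (fun s => vel m k q s r) t * pv f r (along m k q t)
        + pt f (along m k q t)) t := by
  have h := hf.hasFDerivAt.comp_hasDerivAt t (hasDerivAt_along hq)
  rw [fderiv_apply_eq_sum_partials, one_mul, Fin.sum_univ_add] at h
  simp only [hcon t] at h
  exact h

theorem hasDerivAt_abar_along (hq : ContDiff ℝ 2 q) {ν : Fin k} (hα : ContDiff ℝ 2 (α ν)) :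
    HasDerivAt (fun s => abar α ν (along m k q s))
      (∑ r, (deriv (fun s => vel m k q s r) t * pv (α ν) r (along m k q t)
        + vel m k q t r * deriv (fun s => pv (α ν) r (along m k q s)) t)) t :=
  HasDerivAt.fun_sum fun r _ => (differentiable_vel hq r t).hasDerivAt.mul
    ((differentiable_pv hα r _).comp t (hasDerivAt_along hq).differentiableAt).hasDerivAt

end Curve

theorem Bbar_formula_general (m k : ℕ)
    (α : Fin k → Pt m k → ℝ) (hα : ∀ ν, ContDiff ℝ 2 (α ν))
    (q : ℝ → Fin (m+k) → ℝ) (hq : ContDiff ℝ 2 q)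
    (hcon : Constrained α q)
 :
    ∀ (ν : Fin k) (t : ℝ),
      ∑ r : Fin m, Bco α q r ν t * vel m k q t r
        = deriv (fun s => abar α ν (along m k q s) - α ν (along m k q s)) t
          - ∑ μ : Fin k,
              pq (α ν) (Fin.natAdd m μ) (along m k q t)
                * (abar α μ (along m k q t) - α μ (along m k q t))
          + pt (α ν) (along m k q t) := by
  intro ν t
  rw [((hasDerivAt_abar_along hq (hα ν)).fun_sub
    (hcon.hasDerivAt_comp_along hq ((hα ν).differentiable two_ne_zero _))).deriv]
  have hswap :
      ∑ r, (∑ μ, pv (α μ) r (along m k q t) * pq (α ν) (Fin.natAdd m μ) (along m k q t))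
        * vel m k q t r
      = ∑ μ, pq (α ν) (Fin.natAdd m μ) (along m k q t) * abar α μ (along m k q t) := by
    simp only [abar, Finset.sum_mul, Finset.mul_sum]
    rw [Finset.sum_comm]
    exact Finset.sum_congr rfl fun _ _ => Finset.sum_congr rfl fun _ _ => by
      dsimp only [along]; ring
  simp only [Bco, sub_mul, Finset.sum_sub_distrib, Finset.sum_add_distrib, mul_sub, hswap,
    mul_comm (vel m k q t _), mul_comm (α _ (along m k q t))]
  ring

theorem Bbar_formula (m k : ℕ) (hm : 0 < m) (hk : 0 < k)
    (α : Fin k → Pt m k → ℝ) (hα : ∀ ν, ContDiff ℝ 2 (α ν))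
    (q : ℝ → Fin (m+k) → ℝ) (hq : ContDiff ℝ 2 q)
    (hcon : Constrained α q)
 :
    ∀ (ν : Fin k) (t : ℝ),
      ∑ r : Fin m, Bco α q r ν t * vel m k q t r
        = deriv (fun s => abar α ν (along m k q s) - α ν (along m k q s)) t
          - ∑ μ : Fin k,
              pq (α ν) (Fin.natAdd m μ) (along m k q t)
                * (abar α μ (along m k q t) - α μ (along m k q t))
          + pt (α ν) (along m k q t) :=
  Bbar_formula_general m k α hα q hq hcon

end NH
end
end

section
/- (i) If ᾱ_ν(q,v,t) = α_ν(q,v,t) for every ν = 1,…,k and every (q,v,t) ∈ ℝⁿ × ℝᵐ × ℝ, then E*(q,v,t) = E(q,v,t) for all (q,v,t). (ii) Conversely, if k = 1 and (∂L/∂u_{m+1})(q, û(q,v,t), t) ≠ 0 for all (q,v,t), then E* = E as functions on ℝⁿ × ℝᵐ × ℝ implies ᾱ₁(q,v,t) = α₁(q,v,t) for all (q,v,t). -/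
open scoped BigOperators
noncomputable section
namespace NH

variable {m k : ℕ}

/-! The operator `∑ v_r ∂/∂v_r` is the derivative in the direction `(0, v, 0)`. By the chain rule,
applied to `L* = L ∘ (q, û, t)`, it turns `∑ v_r ∂L*/∂v_r` into `∑ w_i ∂L/∂u_i` with
`w = (v, ᾱ)`, whereas `E` pairs `∂L/∂u` with `û = (v, α)`. Hence
`E* − E = ∑_ν (ᾱ_ν − α_ν) ∂L/∂u_{m+ν}`, which vanishes when `ᾱ = α`; for `k = 1` the single factor
`∂L/∂u_{m+1}` is nonzero, so conversely `E* = E` forces `ᾱ₁ = α₁`. -/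

theorem sum_mul_pv {n m' : ℕ} (f : (Fin n → ℝ) × (Fin m' → ℝ) × ℝ → ℝ)
    (x : (Fin n → ℝ) × (Fin m' → ℝ) × ℝ) (w : Fin m' → ℝ) :
    ∑ j, w j * pv f j x = fderiv ℝ f x (0, w, 0) := by
  have hw : ((0 : Fin n → ℝ), w, (0 : ℝ)) =
      ∑ j, w j • ((0 : Fin n → ℝ), Pi.single j (1 : ℝ), (0 : ℝ)) := by
    ext <;> simp [Prod.fst_sum, Prod.snd_sum, Finset.sum_apply, Pi.single_apply]
  rw [hw, map_sum]
  simp only [map_smul, smul_eq_mul, pv]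

theorem abar_eq_fderiv (α : Fin k → Pt m k → ℝ) (ν : Fin k) (x : Pt m k) :
    abar α ν x = fderiv ℝ (α ν) x (0, x.2.1, 0) :=
  sum_mul_pv (α ν) x x.2.1

theorem differentiableAt_uhat {α : Fin k → Pt m k → ℝ} {x : Pt m k}
    (hα : ∀ ν, DifferentiableAt ℝ (α ν) x) : DifferentiableAt ℝ (uhat α) x := by
  refine differentiableAt_pi.2 (Fin.addCases (fun r => ?_) (fun ν => ?_))
  · simp only [uhat, Fin.append_left]; fun_prop
  · simpa only [uhat, Fin.append_right] using hα ν

theorem fderiv_uhat_apply {α : Fin k → Pt m k → ℝ} {x : Pt m k}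
    (hα : ∀ ν, DifferentiableAt ℝ (α ν) x) (v : Pt m k) :
    fderiv ℝ (uhat α) x v = Fin.append v.2.1 (fun ν => fderiv ℝ (α ν) x v) := by
  funext i
  calc fderiv ℝ (uhat α) x v i = fderiv ℝ (fun y => uhat α y i) x v := by
        rw [fderiv_apply (differentiableAt_uhat hα) i]; rfl
    _ = _ := by
        refine Fin.addCases (fun r => ?_) (fun ν => ?_) i
        · simp only [uhat, Fin.append_left]
          rw [fderiv_apply (by fun_prop) r, hasFDerivAt_snd.fst.fderiv]
          rfl
        · simp only [uhat, Fin.append_right]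

theorem differentiableAt_Lpt {α : Fin k → Pt m k → ℝ} {x : Pt m k}
    (hα : ∀ ν, DifferentiableAt ℝ (α ν) x) : DifferentiableAt ℝ (Lpt α) x :=
  differentiableAt_fst.prodMk ((differentiableAt_uhat hα).prodMk differentiableAt_snd.snd)

theorem fderiv_Lpt_apply {α : Fin k → Pt m k → ℝ} {x : Pt m k}
    (hα : ∀ ν, DifferentiableAt ℝ (α ν) x) (v : Pt m k) :
    fderiv ℝ (Lpt α) x v = (v.1, Fin.append v.2.1 (fun ν => fderiv ℝ (α ν) x v), v.2.2) := by
  have h : HasFDerivAt (Lpt α) _ x :=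
    hasFDerivAt_fst.prodMk ((differentiableAt_uhat hα).hasFDerivAt.prodMk hasFDerivAt_snd.snd)
  rw [h.fderiv, ← fderiv_uhat_apply hα]
  rfl

theorem Estar_sub_En {L : PtL m k → ℝ} {α : Fin k → Pt m k → ℝ} {x : Pt m k}
    (hL : DifferentiableAt ℝ L (Lpt α x)) (hα : ∀ ν, DifferentiableAt ℝ (α ν) x) :
    Estar L α x - En L α x
      = ∑ ν, (abar α ν x - α ν x) * pv L (Fin.natAdd m ν) (Lpt α x) := by
  have hEuler : ∑ r, x.2.1 r * pv (Lstar L α) r x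
      = ∑ i, Fin.append x.2.1 (fun ν => abar α ν x) i * pv L i (Lpt α x) := by
    have hchain : fderiv ℝ (Lstar L α) x = (fderiv ℝ L (Lpt α x)).comp (fderiv ℝ (Lpt α) x) :=
      fderiv_comp x hL (differentiableAt_Lpt hα)
    rw [sum_mul_pv, sum_mul_pv, hchain]
    simp [fderiv_Lpt_apply hα, abar_eq_fderiv]
  rw [Estar, En, hEuler, uhat, Fin.sum_univ_add, Fin.sum_univ_add]
  simp only [Fin.append_left, Fin.append_right, sub_mul, Finset.sum_sub_distrib]
  ring

theorem energy_equality_iff_general (m k : ℕ)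
    (L : PtL m k → ℝ) (hL : ContDiff ℝ 2 L)
    (α : Fin k → Pt m k → ℝ) (hα : ∀ ν, ContDiff ℝ 2 (α ν))
 :
    ((∀ (ν : Fin k) (x : Pt m k), abar α ν x = α ν x) →
      ∀ x : Pt m k, Estar L α x = En L α x)
    ∧ (∀ (L₁ : PtL m 1 → ℝ), ContDiff ℝ 2 L₁ →
        ∀ (α₁ : Fin 1 → Pt m 1 → ℝ), (∀ ν, ContDiff ℝ 2 (α₁ ν)) →
        (∀ x : Pt m 1, pv L₁ (Fin.natAdd m (0 : Fin 1)) (Lpt α₁ x) ≠ 0) →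
        (∀ x : Pt m 1, Estar L₁ α₁ x = En L₁ α₁ x) →
        ∀ x : Pt m 1, abar α₁ (0 : Fin 1) x = α₁ (0 : Fin 1) x) := by
  constructor
  · intro habar x
    have hdiff := Estar_sub_En (hL.differentiable two_ne_zero _)
      (fun ν => (hα ν).differentiable two_ne_zero x)
    simpa [habar, sub_eq_zero] using hdiff
  · intro L₁ hL₁ α₁ hα₁ hpv hE x
    have hdiff := Estar_sub_En (hL₁.differentiable two_ne_zero _)
      (fun ν => (hα₁ ν).differentiable two_ne_zero x)
    rw [hE x, sub_self, Fin.sum_univ_one, eq_comm, mul_eq_zero] at hdiff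
    exact sub_eq_zero.1 (hdiff.resolve_right (hpv x))

theorem energy_equality_iff (m k : ℕ) (hm : 0 < m) (hk : 0 < k)
    (L : PtL m k → ℝ) (hL : ContDiff ℝ 2 L)
    (α : Fin k → Pt m k → ℝ) (hα : ∀ ν, ContDiff ℝ 2 (α ν))
 :
    ((∀ (ν : Fin k) (x : Pt m k), abar α ν x = α ν x) →
      ∀ x : Pt m k, Estar L α x = En L α x)
    ∧ (∀ (L₁ : PtL m 1 → ℝ), ContDiff ℝ 2 L₁ →
        ∀ (α₁ : Fin 1 → Pt m 1 → ℝ), (∀ ν, ContDiff ℝ 2 (α₁ ν)) →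
        (∀ x : Pt m 1, pv L₁ (Fin.natAdd m (0 : Fin 1)) (Lpt α₁ x) ≠ 0) →
        (∀ x : Pt m 1, Estar L₁ α₁ x = En L₁ α₁ x) →
        ∀ x : Pt m 1, abar α₁ (0 : Fin 1) x = α₁ (0 : Fin 1) x) :=
  energy_equality_iff_general m k L hL α hα

end NH
end
end

section
/- Let the kinetic energy be T(u) = ½∑_{i=1}^n M_i u_i² with constants M_i > 0, let U : ℝⁿ × ℝ → ℝ be C² and L(q,u,t) = T(u) + U(q,t). Let q : ℝ → ℝⁿ be a C² curve satisfying the constraints and satisfying, for every r = 1,…,m, the reduced equations M_r q̈_r + ∑_{ν=1}^k M_{m+ν} (∂α_ν/∂v_r)(q,v,t) · d/dt[α_ν(q(t),v(t),t)] = (∂U/∂q_r)(q,t) + ∑_{ν=1}^k (∂α_ν/∂v_r)(q,v,t)·(∂U/∂q_{m+ν})(q,t). Then at every time t: d/dt[½∑_{r=1}^m M_r q̇_r² − U(q(t),t)] + ∑_{ν=1}^k M_{m+ν} ᾱ_ν(q,v,t)· d/dt[α_ν(q(t),v(t),t)] = ∑_{ν=1}^k (ᾱ_ν − α_ν)(q,v,t)·(∂U/∂q_{m+ν})(q(t),t)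 − (∂U/∂t)(q(t),t). -/
/-! Differentiating along the curve, the time derivative of `½∑ M_r v_r² − U(q, t)` is
`∑_r v_r M_r v̇_r − ∑_i q̇_i ∂U/∂q_i − ∂U/∂t`, where the constraints turn `q̇_{m+ν}` into `α_ν`.
Contracting the reduced equations with `v_r` and summing over `r` replaces `∑_r v_r M_r v̇_r`;
what is left is regrouped by `∑_r v_r ∑_ν c_ν ∂α_ν/∂v_r = ∑_ν c_ν ᾱ_ν`. -/

open scoped BigOperators
noncomputable section
namespace NH

variable {m k : ℕ}

theorem _root_.ContinuousLinearMap.apply_pair_eq_sum_single {n : ℕ}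
    (L : ((Fin n → ℝ) × ℝ) →L[ℝ] ℝ) (w : Fin n → ℝ) (c : ℝ) :
    L (w, c) = ∑ i, w i * L (Pi.single i 1, 0) + c * L (0, 1) := by
  have hw : (w, c) = ∑ i, w i • ((Pi.single i 1 : Fin n → ℝ), (0 : ℝ)) + c • (0, 1) := by
    ext <;> simp [Prod.fst_sum, Prod.snd_sum, ← Pi.single_smul, Finset.univ_sum_single]
  rw [hw, map_add, map_sum]
  simp only [map_smul, smul_eq_mul]

theorem hasDerivAt_comp_graph {n : ℕ} {U : (Fin n → ℝ) × ℝ → ℝ} {q : ℝ → Fin n → ℝ} {t : ℝ}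
    (hU : DifferentiableAt ℝ U (q t, t)) (hq : DifferentiableAt ℝ q t) :
    HasDerivAt (fun s => U (q s, s)) (∑ i, qdot q t i * pUq U i (q t, t) + pUt U (q t, t)) t := by
  have hq' : HasDerivAt q (qdot q t) t :=
    hasDerivAt_pi.mpr fun i => (differentiableAt_pi.mp hq i).hasDerivAt
  have := hU.hasFDerivAt.comp_hasDerivAt (f := fun s => (q s, s)) t (hq'.prodMk (hasDerivAt_id t))
  rwa [ContinuousLinearMap.apply_pair_eq_sum_single, one_mul] at this

theorem hasDerivAt_qdot {n : ℕ} {q : ℝ → Fin n → ℝ} (hq : ContDiff ℝ 2 q) (i : Fin n) (t : ℝ) :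
    HasDerivAt (fun s => qdot q s i) (deriv (fun s => qdot q s i) t) t := by
  have hqi : ContDiff ℝ (1 + 1) (fun s => q s i) := contDiff_pi.mp hq i
  exact ((contDiff_succ_iff_deriv.mp hqi).2.2.differentiable one_ne_zero t).hasDerivAt

theorem _root_.HasDerivAt.half_sum_mul_sq {ι : Type*} [Fintype ι] {c : ι → ℝ} {f : ℝ → ι → ℝ}
    {f' : ι → ℝ} {t : ℝ} (hf : ∀ i, HasDerivAt (fun s => f s i) (f' i) t) :
    HasDerivAt (fun s => (1 / 2) * ∑ i, c i * f s i ^ 2) (∑ i, f t i * (c i * f' i)) t := by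
  refine ((HasDerivAt.fun_sum (u := Finset.univ) fun i _ =>
    ((hf i).pow 2).const_mul (c i)).const_mul (1 / 2)).congr_deriv ?_
  rw [Finset.mul_sum]
  exact Finset.sum_congr rfl fun i _ => by push_cast; ring

theorem sum_mul_abar_mul (α : Fin k → Pt m k → ℝ) (x : Pt m k) (a b : Fin k → ℝ) :
    ∑ ν, a ν * abar α ν x * b ν = ∑ r, x.2.1 r * ∑ ν, a ν * pv (α ν) r x * b ν := by
  simp only [abar, Finset.mul_sum, Finset.sum_mul]
  rw [Finset.sum_comm]
  exact Finset.sum_congr rfl fun r _ => Finset.sum_congr rfl fun ν _ => by ring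

theorem pointmass_energy_balance_general (m k : ℕ)
    (M : Fin (m+k) → ℝ)
    (U : (Fin (m+k) → ℝ) × ℝ → ℝ) (hU : ContDiff ℝ 2 U)
    (α : Fin k → Pt m k → ℝ)
    (q : ℝ → Fin (m+k) → ℝ) (hq : ContDiff ℝ 2 q)
    (hcon : Constrained α q)
    (hred : ∀ (r : Fin m) (t : ℝ),
      M (Fin.castAdd k r) * deriv (fun s => qdot q s (Fin.castAdd k r)) t
        + ∑ ν : Fin k, M (Fin.natAdd m ν) * pv (α ν) r (along m k q t)
            * deriv (fun s => α ν (along m k q s)) t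
      = pUq U (Fin.castAdd k r) (q t, t)
        + ∑ ν : Fin k, pv (α ν) r (along m k q t) * pUq U (Fin.natAdd m ν) (q t, t)) :
    ∀ t : ℝ,
      deriv (fun s =>
          (1/2) * ∑ r : Fin m, M (Fin.castAdd k r) * (vel m k q s r) ^ 2 - U (q s, s)) t
        + ∑ ν : Fin k, M (Fin.natAdd m ν) * abar α ν (along m k q t)
            * deriv (fun s => α ν (along m k q s)) t
      = ∑ ν : Fin k,
          (abar α ν (along m k q t) - α ν (along m k q t)) * pUq U (Fin.natAdd m ν) (q t, t)
        - pUt U (q t, t) := by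
  intro t
  have hT := HasDerivAt.half_sum_mul_sq (c := fun r => M (Fin.castAdd k r)) (f := vel m k q)
    fun r => hasDerivAt_qdot hq (Fin.castAdd k r) t
  have hV := hasDerivAt_comp_graph (hU.differentiable two_ne_zero _)
    (hq.differentiable two_ne_zero t)
  have hpower := Finset.sum_congr rfl fun r (_ : r ∈ Finset.univ) =>
    congrArg (vel m k q t r * ·) (hred r t)
  simp only [mul_add, Finset.sum_add_distrib] at hpower
  rw [(hT.fun_sub hV).deriv, Fin.sum_univ_add]
  have hv : ∀ r, qdot q t (Fin.castAdd k r) = vel m k q t r := fun _ => rfl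
  simp only [hcon t, hv, sub_mul, Finset.sum_sub_distrib]
  have hUq := sum_mul_abar_mul α (along m k q t) (fun _ => 1)
    fun ν => pUq U (Fin.natAdd m ν) (q t, t)
  simp only [one_mul] at hUq
  have hx : (along m k q t).2.1 = vel m k q t := rfl
  rw [sum_mul_abar_mul, hUq, hx]
  linear_combination hpower

theorem pointmass_energy_balance (m k : ℕ) (hm : 0 < m) (hk : 0 < k)
    (M : Fin (m+k) → ℝ) (hM : ∀ i, 0 < M i)
    (U : (Fin (m+k) → ℝ) × ℝ → ℝ) (hU : ContDiff ℝ 2 U)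
    (α : Fin k → Pt m k → ℝ) (hα : ∀ ν, ContDiff ℝ 2 (α ν))
    (q : ℝ → Fin (m+k) → ℝ) (hq : ContDiff ℝ 2 q)
    (hcon : Constrained α q)
    (hred : ∀ (r : Fin m) (t : ℝ),
      M (Fin.castAdd k r) * deriv (fun s => qdot q s (Fin.castAdd k r)) t
        + ∑ ν : Fin k, M (Fin.natAdd m ν) * pv (α ν) r (along m k q t)
            * deriv (fun s => α ν (along m k q s)) t
      = pUq U (Fin.castAdd k r) (q t, t)
        + ∑ ν : Fin k, pv (α ν) r (along m k q t) * pUq U (Fin.natAdd m ν) (q t, t)) :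
    ∀ t : ℝ,
      deriv (fun s =>
          (1/2) * ∑ r : Fin m, M (Fin.castAdd k r) * (vel m k q s r) ^ 2 - U (q s, s)) t
        + ∑ ν : Fin k, M (Fin.natAdd m ν) * abar α ν (along m k q t)
            * deriv (fun s => α ν (along m k q s)) t
      = ∑ ν : Fin k,
          (abar α ν (along m k q t) - α ν (along m k q t)) * pUq U (Fin.natAdd m ν) (q t, t)
        - pUt U (q t, t) :=
  pointmass_energy_balance_general m k M U hU α q hq hcon hred

end NH
end
end
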